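/- Assume the relative ICC condition. For characters s and t of H, the representations π_s and π_t are unitarily equivalent (there exists a unitary U on ℓ²(C) with U ∘ π_t(x) = π_s(x) ∘ U for all x ∈ G) if and only if their restrictions to H are unitarily equivalent (there exists a unitary V on ℓ²(C) with V ∘ π_t(h) = π_s(h) ∘ V for all h ∈ H). -/

import Mathlib

/-!
If `V` intertwines the restrictions to `H`, then `v = V ε_{σ 1}` is a nonzero vector on which `H`
acts through `π_s` by the character `t`. The moduli of the coordinates of `v` are constant along the
orbits `c ↦ σ (h * c)`, so square-summability makes the orbit of any `d` with `v d ≠ 0` finite. Since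
`H` is abelian, the `H`-conjugates of `d x d⁻¹` (`x ∈ H`) are then finitely many, and the relative
ICC condition forces `d` to normalize `H`. Comparing the coordinates at `d` shows that `ε_d` is again
a `t`-eigenvector of `π_s` on `H`, and as `d` normalizes `H` the vectors `π_s c ε_d` (`c ∈ C`) form a
Hilbert basis. The unitary sending `ε_c` to `π_s c ε_d` intertwines `π_t` with `π_s`.
-/

open scoped lp

theorem lp.finite_setOf_le_norm {ι : Type*} {E : ι → Type*} [∀ i, NormedAddCommGroup (E i)]
    {p : ENNReal} (hp : 0 < p.toReal) (f : lp E p) {ε : ℝ} (hε : 0 < ε) :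
    {i | ε ≤ ‖f i‖}.Finite := by
  have hsmall := ((lp.memℓp f).summable hp).tendsto_cofinite_zero.eventually_lt_const
    (Real.rpow_pos_of_pos hε p.toReal)
  refine (Filter.eventually_cofinite.mp hsmall).subset fun i hi => ?_
  exact not_lt.mpr (Real.rpow_le_rpow hε.le hi hp.le)

theorem lp.ext_single_one {ι 𝕜 F : Type*} [NormedRing 𝕜] [DecidableEq ι] [AddCommMonoid F]
    [Module 𝕜 F] [TopologicalSpace F] [T2Space F] {p : ENNReal} [Fact (1 ≤ p)] (hp : p ≠ ⊤)
    {f g : lp (fun _ : ι => 𝕜) p →L[𝕜] F} (h : ∀ i, f (lp.single p i 1) = g (lp.single p i 1)) :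
    f = g :=
  lp.ext_continuousLinearMap hp fun i => ContinuousLinearMap.ext_ring (h i)

section

variable {G : Type*} [Group G] {H : Subgroup G} {C : Set G} {σ : G → C} {η : G → H}

theorem LinearIsometryEquiv.map_mul_apply {𝕜 E : Type*} [Semiring 𝕜] [SeminormedAddCommGroup E]
    [Module 𝕜 E] (π : G →* (E ≃ₗᵢ[𝕜] E)) (g g' : G) (x : E) : π (g * g') x = π g (π g' x) := by
  rw [map_mul]
  rfl

theorem Subgroup.mul_comm_of_mem (hab : ∀ a b : H, a * b = b * a) {x y : G} (hx : x ∈ H)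
    (hy : y ∈ H) : x * y = y * x :=
  congrArg Subtype.val (hab ⟨x, hx⟩ ⟨y, hy⟩)

def IsRelativeICC (H : Subgroup G) : Prop :=
  ∀ g : G, g ∉ H → {x : G | ∃ h ∈ H, x = h * g * h⁻¹}.Infinite

structure IsCosetDecomposition (σ : G → C) (η : G → H) : Prop where
  eq_mul : ∀ g : G, g = (σ g : G) * (η g : G)
  unique : ∀ (g : G) (c : C) (h : H), g = (c : G) * (h : G) → c = σ g ∧ h = η g

namespace IsCosetDecomposition

theorem of_eq_mul (hS : IsCosetDecomposition σ η) {g : G} {c : C} {h : H}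
    (e : g = (c : G) * (h : G)) : σ g = c ∧ η g = h :=
  (hS.unique g c h e).imp Eq.symm Eq.symm

theorem sigma_coe (hS : IsCosetDecomposition σ η) (c : C) : σ c = c :=
  (hS.of_eq_mul (c := c) (h := 1) (by simp)).1

theorem eta_coe (hS : IsCosetDecomposition σ η) (c : C) : η c = 1 :=
  (hS.of_eq_mul (c := c) (h := 1) (by simp)).2

theorem sigma_eq_iff (hS : IsCosetDecomposition σ η) (g : G) (c : C) :
    σ g = c ↔ (c : G)⁻¹ * g ∈ H := by
  constructor
  · rintro rfl
    convert (η g).2 using 1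
    exact inv_mul_eq_iff_eq_mul.mpr (hS.eq_mul g)
  · intro hg
    exact (hS.of_eq_mul (h := ⟨_, hg⟩) (mul_inv_cancel_left _ _).symm).1

theorem eq_of_inv_mul_mem (hS : IsCosetDecomposition σ η) {c c' : C}
    (h : (c : G)⁻¹ * c' ∈ H) : c = c' :=
  ((hS.sigma_eq_iff c' c).mpr h).symm.trans (hS.sigma_coe c')

theorem sigma_one_mem (hS : IsCosetDecomposition σ η) : (σ 1 : G) ∈ H := by
  simpa using (hS.sigma_eq_iff 1 (σ 1)).mp rfl

theorem apply_eq_smul_apply_sigma (hS : IsCosetDecomposition σ η) {E : Type*}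
    [SeminormedAddCommGroup E] [NormedSpace ℂ E] {π : G →* (E ≃ₗᵢ[ℂ] E)} {τ : H →* Circle}
    {u : E} (hu : ∀ h : H, π h u = (τ h : ℂ) • u) (g : G) :
    π g u = (τ (η g) : ℂ) • π (σ g) u :=
  calc π g u = π (σ g * η g) u := by rw [← hS.eq_mul g]
    _ = π (σ g) (π (η g) u) := LinearIsometryEquiv.map_mul_apply π _ _ u
    _ = (τ (η g) : ℂ) • π (σ g) u := by rw [hu, map_smul]

end IsCosetDecomposition

namespace IsRelativeICC

theorem conj_mem_of_finite_range_sigma_mul (hicc : IsRelativeICC H)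
    (hab : ∀ a b : H, a * b = b * a) (hS : IsCosetDecomposition σ η) {d : G}
    (hfin : (Set.range fun h : H => σ (h * d)).Finite) : ∀ x ∈ H, d * x * d⁻¹ ∈ H := by
  intro x hx
  by_contra hg
  refine hicc _ hg ((hfin.image fun c : C => (c : G) * x * (c : G)⁻¹).subset ?_)
  rintro _ ⟨h, hh, rfl⟩
  refine ⟨σ (h * d), ⟨⟨h, hh⟩, rfl⟩, ?_⟩
  change (σ (h * d) : G) * x * (σ (h * d) : G)⁻¹ = h * (d * x * d⁻¹) * h⁻¹
  -- writing `h * d = c * k` with `k ∈ H` commuting with `x`, the conjugate only depends on `c`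
  have hk : (η (h * d) : G) * x = x * η (h * d) := H.mul_comm_of_mem hab (η _).2 hx
  have hd : h * d = σ (h * d) * η (h * d) := hS.eq_mul _
  generalize (σ (h * d) : G) = c, (η (h * d) : G) = k at hk hd
  obtain rfl : h = c * k * d⁻¹ := by rw [← hd]; group
  calc c * x * c⁻¹ = c * (x * k) * k⁻¹ * c⁻¹ := by group
    _ = c * k * d⁻¹ * (d * x * d⁻¹) * (c * k * d⁻¹)⁻¹ := by rw [← hk]; group

theorem inv_conj_mem_of_conj_mem (hicc : IsRelativeICC H) (hab : ∀ a b : H, a * b = b * a)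
    {d : G} (hd : ∀ x ∈ H, d * x * d⁻¹ ∈ H) : ∀ x ∈ H, d⁻¹ * x * d ∈ H := by
  intro x hx
  by_contra hg
  refine hicc _ hg ((Set.finite_singleton (d⁻¹ * x * d)).subset ?_)
  rintro _ ⟨h, hh, rfl⟩
  have hc : d * h * d⁻¹ * x = x * (d * h * d⁻¹) := H.mul_comm_of_mem hab (hd h hh) hx
  calc h * (d⁻¹ * x * d) * h⁻¹ = d⁻¹ * (d * h * d⁻¹ * x) * (d * h * d⁻¹)⁻¹ * d := by group
    _ = d⁻¹ * x * d := by rw [hc]; group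

theorem mem_normalizer_of_finite_range_sigma_mul (hicc : IsRelativeICC H)
    (hab : ∀ a b : H, a * b = b * a) (hS : IsCosetDecomposition σ η) {d : G}
    (hfin : (Set.range fun h : H => σ (h * d)).Finite) : d ∈ Subgroup.normalizer (H : Set G) := by
  have hconj := hicc.conj_mem_of_finite_range_sigma_mul hab hS hfin
  refine Subgroup.mem_normalizer_iff.mpr fun x => ⟨hconj x, fun hx => ?_⟩
  simpa [mul_assoc] using hicc.inv_conj_mem_of_conj_mem hab hconj _ hx

end IsRelativeICC

variable [DecidableEq C]

def IsInducedRepresentation (σ : G → C) (η : G → H) (χ : H →* Circle)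
    (π : G →* (ℓ²(C, ℂ) ≃ₗᵢ[ℂ] ℓ²(C, ℂ))) : Prop :=
  ∀ (g : G) (c : C), π g (lp.single 2 c 1) = (χ (η (g * c)) : ℂ) • lp.single 2 (σ (g * c)) 1

namespace IsInducedRepresentation

variable {χ : H →* Circle} {π : G →* (ℓ²(C, ℂ) ≃ₗᵢ[ℂ] ℓ²(C, ℂ))}

theorem apply_sigma_mul (hπ : IsInducedRepresentation σ η χ π) (hS : IsCosetDecomposition σ η)
    (g : G) (f : ℓ²(C, ℂ)) (c : C) : π g f (σ (g * c)) = χ (η (g * c)) * f c := by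
  have hback := hS.of_eq_mul (g := g⁻¹ * σ (g * c)) (c := c) (h := (η (g * c))⁻¹) <| by
    rw [Subgroup.coe_inv, inv_mul_eq_iff_eq_mul, ← mul_assoc, eq_mul_inv_iff_mul_eq]
    exact (hS.eq_mul _).symm
  have hinv : π g (π g⁻¹ (lp.single 2 (σ (g * c)) 1)) = lp.single 2 (σ (g * c)) 1 := by
    simp
  calc π g f (σ (g * c)) = inner ℂ (lp.single 2 (σ (g * c)) (1 : ℂ)) (π g f) := by
        simp [lp.inner_single_left]
    _ = inner ℂ (π g⁻¹ (lp.single 2 (σ (g * c)) 1)) f := by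
        rw [← (π g).inner_map_map (π g⁻¹ _) f, hinv]
    _ = χ (η (g * c)) * f c := by
        rw [hπ, hback.1, hback.2, inner_smul_left, lp.inner_single_left, map_inv,
          Circle.coe_inv_eq_conj, Complex.conj_conj]
        simp

theorem mul_apply_sigma_mul_of_eigen (hπ : IsInducedRepresentation σ η χ π)
    (hS : IsCosetDecomposition σ η) {τ : H →* Circle} {v : ℓ²(C, ℂ)}
    (hv : ∀ h : H, π h v = (τ h : ℂ) • v) (h : H) (c : C) :
    (τ h : ℂ) * v (σ (h * c)) = χ (η (h * c)) * v c := by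
  rw [← hπ.apply_sigma_mul hS, hv]
  rfl

theorem finite_range_sigma_mul_of_eigen (hπ : IsInducedRepresentation σ η χ π)
    (hS : IsCosetDecomposition σ η) {τ : H →* Circle} {v : ℓ²(C, ℂ)}
    (hv : ∀ h : H, π h v = (τ h : ℂ) • v) {d : C} (hd : v d ≠ 0) :
    (Set.range fun h : H => σ (h * d)).Finite := by
  refine (lp.finite_setOf_le_norm (by norm_num) v (norm_pos_iff.mpr hd)).subset ?_
  rintro _ ⟨h, rfl⟩
  have hnorm := congrArg norm (hπ.mul_apply_sigma_mul_of_eigen hS hv h d)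
  simp only [norm_mul, Circle.norm_coe, one_mul] at hnorm
  exact hnorm.ge

theorem apply_single_of_eigen (hπ : IsInducedRepresentation σ η χ π)
    (hS : IsCosetDecomposition σ η) {τ : H →* Circle} {v : ℓ²(C, ℂ)}
    (hv : ∀ h : H, π h v = (τ h : ℂ) • v) {d : C} (hd : v d ≠ 0)
    (hdN : (d : G) ∈ Subgroup.normalizer (H : Set G)) (h : H) :
    π h (lp.single 2 d 1) = (τ h : ℂ) • lp.single 2 d 1 := by
  have hσ : σ (h * d) = d := (hS.sigma_eq_iff _ d).mpr <| by
    simpa [mul_assoc] using (Subgroup.mem_normalizer_iff''.mp hdN h).mp h.2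
  have hτ : (τ h : ℂ) = χ (η (h * d)) :=
    mul_right_cancel₀ hd (by simpa [hσ] using hπ.mul_apply_sigma_mul_of_eigen hS hv h d)
  rw [hπ, hσ, hτ]

theorem apply_single_sigma_one (hπ : IsInducedRepresentation σ η χ π)
    (hS : IsCosetDecomposition σ η) (hab : ∀ a b : H, a * b = b * a) (h : H) :
    π h (lp.single 2 (σ 1) 1) = (χ h : ℂ) • lp.single 2 (σ 1) 1 := by
  obtain ⟨hσ, hη⟩ := hS.of_eq_mul (H.mul_comm_of_mem hab h.2 hS.sigma_one_mem)
  rw [hπ, hσ, hη]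

theorem orthonormal_apply_single (hπ : IsInducedRepresentation σ η χ π)
    (hS : IsCosetDecomposition σ η) {d : C} (hdN : (d : G) ∈ Subgroup.normalizer (H : Set G)) :
    Orthonormal ℂ fun c : C => π c (lp.single 2 d 1) := by
  refine ⟨fun c => by simp [lp.norm_single], fun c c' hne => ?_⟩
  have hσ : σ ((c : G)⁻¹ * c' * d) ≠ d := fun hσ => hne <| hS.eq_of_inv_mul_mem <|
    (Subgroup.mem_normalizer_iff''.mp hdN _).mpr <| by
      simpa only [mul_assoc] using (hS.sigma_eq_iff _ d).mp hσ
  have hshift : π c (π ((c : G)⁻¹ * c') (lp.single 2 d 1)) = π c' (lp.single 2 d 1) := by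
    rw [← LinearIsometryEquiv.map_mul_apply, mul_inv_cancel_left]
  dsimp only
  rw [← hshift, (π c).inner_map_map, hπ, inner_smul_right, lp.inner_single_left,
    lp.single_apply_ne _ _ _ hσ.symm]
  simp

theorem span_apply_single_dense (hπ : IsInducedRepresentation σ η χ π)
    (hS : IsCosetDecomposition σ η) {τ : H →* Circle} {d : C}
    (hu : ∀ h : H, π h (lp.single 2 d 1) = (τ h : ℂ) • lp.single 2 d 1) :
    ⊤ ≤ (Submodule.span ℂ (Set.range fun c : C => π c (lp.single 2 d 1))).topologicalClosure := by
  have hsingle (c : C) : lp.single 2 c (1 : ℂ) ∈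
      Submodule.span ℂ (Set.range fun c : C => π c (lp.single 2 d 1)) := by
    have hc : lp.single 2 c (1 : ℂ) = π (c * (d : G)⁻¹) (lp.single 2 d 1) := by
      rw [hπ, inv_mul_cancel_right, hS.sigma_coe, hS.eta_coe, map_one, Circle.coe_one, one_smul]
    rw [hc, hS.apply_eq_smul_apply_sigma hu]
    exact Submodule.smul_mem _ _ (Submodule.subset_span ⟨_, rfl⟩)
  have hstd : ⇑(default : HilbertBasis C ℂ ℓ²(C, ℂ)) = fun c : C => lp.single 2 c 1 :=
    funext fun c => ((default : HilbertBasis C ℂ ℓ²(C, ℂ)).repr_symm_single c).symm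
  calc ⊤ = (Submodule.span ℂ (Set.range fun c : C => lp.single 2 c (1 : ℂ))).topologicalClosure :=
        hstd ▸ (default : HilbertBasis C ℂ ℓ²(C, ℂ)).dense_span.symm
    _ ≤ _ := Submodule.topologicalClosure_mono
        (Submodule.span_le.mpr (Set.range_subset_iff.mpr hsingle))

theorem exists_intertwiner {s t : H →* Circle}
    {πs πt : G →* (ℓ²(C, ℂ) ≃ₗᵢ[ℂ] ℓ²(C, ℂ))} (hπs : IsInducedRepresentation σ η s πs)
    (hπt : IsInducedRepresentation σ η t πt) (hS : IsCosetDecomposition σ η) {d : C}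
    (hdN : (d : G) ∈ Subgroup.normalizer (H : Set G))
    (hu : ∀ h : H, πs h (lp.single 2 d 1) = (t h : ℂ) • lp.single 2 d 1) :
    ∃ U : ℓ²(C, ℂ) ≃ₗᵢ[ℂ] ℓ²(C, ℂ), ∀ (x : G) (v : ℓ²(C, ℂ)), U (πt x v) = πs x (U v) := by
  let b := HilbertBasis.mk (hπs.orthonormal_apply_single hS hdN)
    (hπs.span_apply_single_dense hS hu)
  have hb (c : C) : b.repr.symm (lp.single 2 c 1) = πs c (lp.single 2 d 1) := by simp [b]
  have hcomm (x : G) :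
      (b.repr.symm : ℓ²(C, ℂ) →L[ℂ] ℓ²(C, ℂ)).comp (πt x : ℓ²(C, ℂ) →L[ℂ] ℓ²(C, ℂ)) =
        (πs x : ℓ²(C, ℂ) →L[ℂ] ℓ²(C, ℂ)).comp (b.repr.symm : ℓ²(C, ℂ) →L[ℂ] ℓ²(C, ℂ)) := by
    refine lp.ext_single_one (by norm_num) fun c => ?_
    simp only [ContinuousLinearMap.comp_apply, LinearIsometryEquiv.coe_coe'']
    rw [hπt, map_smul, hb, hb, ← hS.apply_eq_smul_apply_sigma hu,
      LinearIsometryEquiv.map_mul_apply]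
  exact ⟨b.repr.symm, fun x v => DFunLike.congr_fun (hcomm x) v⟩

end IsInducedRepresentation

end

theorem unitarily_equivalent_iff_restrictions_unitarily_equivalent_general
    {G : Type*} [Group G] [DecidableEq G]
    (H : Subgroup G) (hab : ∀ a b : H, a * b = b * a)
    (hicc : ∀ g : G, g ∉ H → {x : G | ∃ h ∈ H, x = h * g * h⁻¹}.Infinite)
    (C : Set G)
    (σ : G → C) (η : G → H)
    (hdec : ∀ g : G, g = (σ g : G) * (η g : G))
    (huniq : ∀ (g : G) (c : C) (h : H), g = (c : G) * (h : G) → c = σ g ∧ h = η g)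
    (s t : H →* Circle)
    (πs πt : G →* (lp (fun _ : C => ℂ) 2 ≃ₗᵢ[ℂ] lp (fun _ : C => ℂ) 2))
    (hπs : ∀ (g : G) (c : C), πs g (lp.single 2 c (1 : ℂ)) =
      (s (η (g * (c : G))) : ℂ) • lp.single 2 (σ (g * (c : G))) (1 : ℂ))
    (hπt : ∀ (g : G) (c : C), πt g (lp.single 2 c (1 : ℂ)) =
      (t (η (g * (c : G))) : ℂ) • lp.single 2 (σ (g * (c : G))) (1 : ℂ)) :
    (∃ U : lp (fun _ : C => ℂ) 2 ≃ₗᵢ[ℂ] lp (fun _ : C => ℂ) 2,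
      ∀ (x : G) (v : lp (fun _ : C => ℂ) 2), U (πt x v) = πs x (U v)) ↔
    (∃ V : lp (fun _ : C => ℂ) 2 ≃ₗᵢ[ℂ] lp (fun _ : C => ℂ) 2,
      ∀ (h : H) (v : lp (fun _ : C => ℂ) 2), V (πt (h : G) v) = πs (h : G) (V v)) := by
  refine ⟨fun ⟨U, hU⟩ => ⟨U, fun h => hU h⟩, fun ⟨V, hV⟩ => ?_⟩
  have hS : IsCosetDecomposition σ η := ⟨hdec, huniq⟩
  set v := V (lp.single 2 (σ 1) 1)
  have hv (h : H) : πs h v = (t h : ℂ) • v := by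
    rw [← hV, IsInducedRepresentation.apply_single_sigma_one hπt hS hab, map_smul]
  obtain ⟨d, hd⟩ : ∃ d, v d ≠ 0 := by
    by_contra! hzero
    have hv0 : v = 0 := lp.ext (funext hzero)
    simpa [v, lp.norm_single] using congrArg norm hv0
  have hdN := IsRelativeICC.mem_normalizer_of_finite_range_sigma_mul hicc hab hS
    (IsInducedRepresentation.finite_range_sigma_mul_of_eigen hπs hS hv hd)
  exact IsInducedRepresentation.exists_intertwiner hπs hπt hS hdN
    (IsInducedRepresentation.apply_single_of_eigen hπs hS hv hd hdN)

/-- Assume the relative ICC condition. For characters `s` and `t` of `H`, the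
representations `π_s` and `π_t` are unitarily equivalent if and only if their
restrictions to `H` are unitarily equivalent. -/
theorem unitarily_equivalent_iff_restrictions_unitarily_equivalent
    {G : Type*} [Group G] [DecidableEq G]
    (H : Subgroup G) (hab : ∀ a b : H, a * b = b * a)
    (hicc : ∀ g : G, g ∉ H → {x : G | ∃ h ∈ H, x = h * g * h⁻¹}.Infinite)
    (C : Set G) (hC1 : (1 : G) ∈ C)
    (σ : G → C) (η : G → H)
    (hdec : ∀ g : G, g = (σ g : G) * (η g : G))
    (huniq : ∀ (g : G) (c : C) (h : H), g = (c : G) * (h : G) → c = σ g ∧ h = η g)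
    (s t : H →* Circle)
    (πs πt : G →* (lp (fun _ : C => ℂ) 2 ≃ₗᵢ[ℂ] lp (fun _ : C => ℂ) 2))
    (hπs : ∀ (g : G) (c : C), πs g (lp.single 2 c (1 : ℂ)) =
      (s (η (g * (c : G))) : ℂ) • lp.single 2 (σ (g * (c : G))) (1 : ℂ))
    (hπt : ∀ (g : G) (c : C), πt g (lp.single 2 c (1 : ℂ)) =
      (t (η (g * (c : G))) : ℂ) • lp.single 2 (σ (g * (c : G))) (1 : ℂ)) :
    (∃ U : lp (fun _ : C => ℂ) 2 ≃ₗᵢ[ℂ] lp (fun _ : C => ℂ) 2,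
      ∀ (x : G) (v : lp (fun _ : C => ℂ) 2), U (πt x v) = πs x (U v)) ↔
    (∃ V : lp (fun _ : C => ℂ) 2 ≃ₗᵢ[ℂ] lp (fun _ : C => ℂ) 2,
      ∀ (h : H) (v : lp (fun _ : C => ℂ) 2), V (πt (h : G) v) = πs (h : G) (V v)) :=
  unitarily_equivalent_iff_restrictions_unitarily_equivalent_general H hab hicc C σ η hdec huniq s t
    πs πt hπs hπt
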